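/- arXiv:physics/0301044 — 2 statements merged into one kernel-verified Lean document; each statement's English description precedes it below -/
import Mathlib

section
/- If τ : ℍ → ℝ is a nonzero linear functional such that the bilinear form G_τ(a,b) = τ(a*b) is symmetric, then G_τ has signature (1,3) or (3,1): there exists a basis of ℍ in which the matrix of G_τ is c·diag(1,-1,-1,-1) for some nonzero real c. -/
/-!
Symmetry of `τ (a * b)` forces `τ c = -τ c` whenever `c = a * b = -(b * a)`; applied to
`i * j = k = -(j * i)` and its cyclic versions this gives `τ i = τ j = τ k = 0`. Hence
`τ = τ 1 • re` with `τ 1 ≠ 0`, and in the basis `1, i, j, k` the form `re (a * b)` is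
`diag(1, -1, -1, -1)`.
-/

open scoped Quaternion

theorem map_eq_zero_of_mul_eq_of_mul_eq_neg {A M F : Type*} [Ring A] [AddCommGroup M]
    [IsAddTorsionFree M] [FunLike F A M] [AddMonoidHomClass F A M] {τ : F}
    (hτ : ∀ a b : A, τ (a * b) = τ (b * a)) {a b c : A} (hab : a * b = c) (hba : b * a = -c) :
    τ c = 0 := by
  have := hτ a b
  rwa [hab, hba, map_neg, self_eq_neg] at this

namespace Quaternion

variable {R : Type*} [CommRing R]

variable (R) in
noncomputable def basisOneIJK : Module.Basis (Fin 4) R ℍ[R] :=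
  QuaternionAlgebra.basisOneIJK (-1) 0 (-1)

-- `(basisOneIJK R).repr q` unfolds to `![q.re, q.imI, q.imJ, q.imK]`.
@[simp]
theorem re_basisOneIJK (α : Fin 4) : (basisOneIJK R α).re = Finsupp.single α 1 0 := by
  rw [← (basisOneIJK R).repr_self]; rfl

@[simp]
theorem imI_basisOneIJK (α : Fin 4) : (basisOneIJK R α).imI = Finsupp.single α 1 1 := by
  rw [← (basisOneIJK R).repr_self]; rfl

@[simp]
theorem imJ_basisOneIJK (α : Fin 4) : (basisOneIJK R α).imJ = Finsupp.single α 1 2 := by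
  rw [← (basisOneIJK R).repr_self]; rfl

@[simp]
theorem imK_basisOneIJK (α : Fin 4) : (basisOneIJK R α).imK = Finsupp.single α 1 3 := by
  rw [← (basisOneIJK R).repr_self]; rfl

@[simp]
theorem basisOneIJK_zero : basisOneIJK R 0 = 1 := by
  ext <;> simp

theorem re_basisOneIJK_mul_basisOneIJK (α β : Fin 4) :
    (basisOneIJK R α * basisOneIJK R β).re = Matrix.diagonal ![(1 : R), -1, -1, -1] α β := by
  fin_cases α <;> fin_cases β <;> simp [re_mul, Matrix.diagonal]

theorem map_eq_re_smul_of_map_mul_comm {M : Type*} [AddCommGroup M] [Module R M]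
    [IsAddTorsionFree M] (τ : ℍ[R] →ₗ[R] M) (hτ : ∀ a b : ℍ[R], τ (a * b) = τ (b * a))
    (q : ℍ[R]) : τ q = q.re • τ 1 := by
  set e := basisOneIJK R
  have vanish {α β γ : Fin 4} (hab : e α * e β = e γ) (hba : e β * e α = -e γ) : τ (e γ) = 0 :=
    map_eq_zero_of_mul_eq_of_mul_eq_neg hτ hab hba
  have on_basis (α : Fin 4) : τ (e α) = (e α).re • τ 1 := by
    fin_cases α
    · simp [e]
    · simpa [e] using vanish (α := 2) (β := 3) (by ext <;> simp [e]) (by ext <;> simp [e])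
    · simpa [e] using vanish (α := 3) (β := 1) (by ext <;> simp [e]) (by ext <;> simp [e])
    · simpa [e] using vanish (α := 1) (β := 2) (by ext <;> simp [e]) (by ext <;> simp [e])
  exact LinearMap.congr_fun (e.ext (f₂ := (e.coord 0).smulRight (τ 1)) on_basis) q

end Quaternion

theorem principal_metric_lorentzian (τ : Quaternion ℝ →ₗ[ℝ] ℝ) (hτ : τ ≠ 0)
    (hsymm : ∀ a b : Quaternion ℝ, τ (a * b) = τ (b * a)) :
    ∃ (e : Module.Basis (Fin 4) ℝ (Quaternion ℝ)) (c : ℝ), c ≠ 0 ∧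
      ∀ α β : Fin 4,
        τ (e α * e β) = c * Matrix.diagonal ![(1 : ℝ), -1, -1, -1] α β := by
  have hτ_eq := Quaternion.map_eq_re_smul_of_map_mul_comm τ hsymm
  refine ⟨Quaternion.basisOneIJK ℝ, τ 1, fun h ↦ hτ (LinearMap.ext fun q ↦ ?_), fun α β ↦ ?_⟩
  · simp [hτ_eq q, h]
  · rw [hτ_eq, Quaternion.re_basisOneIJK_mul_basisOneIJK, smul_eq_mul, mul_comm]
end

section
/- Let A be a finite-dimensional associative real algebra with identity in which the nonzero elements form a group under multiplication. Then the dimension of A over ℝ is 1, 2, or 4; in particular, if A is not commutative, then A is 4-dimensional and isomorphic as an ℝ-algebra to the quaternions ℍ. -/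
/-! Every element `x` of `A` satisfies a real quadratic equation, since its minimal polynomial is
irreducible over `ℝ`; completing the square, either `x` is real or a real affine combination of `x`
squares to `-1`. For such an `i`, an element `u` with `u * u = -1` commuting with `i` satisfies
`(u + i) * (u - i) = 0`, so the centralizer of `i` is `ℝ + ℝ i`. If `i` is central, `A ≅ ℂ`.
Otherwise `z = y + i y i` anticommutes with `i` for some `y`; then `z * z` commutes with `i` and
with `z`, which forces `z * z` to be a negative real, and rescaling `z` gives `j` with
`j * j = -1` and `j i = - i j`. Splitting any `x` into parts commuting and anticommuting with `i`
shows that `1, i, j, i j` span `A`, so `A ≅ ℍ`. -/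

open Polynomial

theorem Polynomial.IsMonicOfDegree.exists_eq_sub_C_mul_self_sub_C {K : Type*} [Field K]
    [NeZero (2 : K)] {p : K[X]} (hp : p.IsMonicOfDegree 2) :
    ∃ t r : K, p = (X - C t) * (X - C t) - C r := by
  obtain ⟨a, b, rfl⟩ := isMonicOfDegree_two_iff'.mp hp
  obtain ⟨t, rfl⟩ : ∃ t, a = 2 * t := ⟨a / 2, (mul_div_cancel₀ a two_ne_zero).symm⟩
  refine ⟨t, t ^ 2 - b, ?_⟩
  simp only [map_mul, map_sub, map_pow, map_ofNat]
  ring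

section Ring

variable {R : Type*} [Ring R] {i : R}

theorem commute_sub_mul_mul_of_mul_self_eq_neg_one (hi : i * i = -1) (x : R) :
    Commute (x - i * x * i) i := by
  show (x - i * x * i) * i = i * (x - i * x * i)
  linear_combination (norm := noncomm_ring) -(i * x) * hi + hi * (x * i)

theorem add_mul_mul_mul_eq_mul_sub_mul (hi : i * i = -1) (x : R) :
    (x + i * x * i) * i = x * i - i * x := by
  linear_combination (norm := noncomm_ring) (i * x) * hi

theorem add_mul_mul_mul_eq_neg_mul (hi : i * i = -1) (x : R) :
    (x + i * x * i) * i = -(i * (x + i * x * i)) := by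
  linear_combination (norm := noncomm_ring) (i * x) * hi + hi * (x * i)

theorem commute_mul_self_of_mul_eq_neg_mul {z : R} (h : z * i = -(i * z)) :
    Commute (z * z) i := by
  show z * z * i = i * (z * z)
  rw [mul_assoc, h, mul_neg, ← mul_assoc, h, neg_mul, neg_neg, mul_assoc]

theorem eq_or_eq_neg_of_mul_self_eq_neg_one [NoZeroDivisors R] {u : R} (hu : u * u = -1)
    (hi : i * i = -1) (h : Commute u i) : u = i ∨ u = -i := by
  have : (u + i) * (u - i) = 0 := by rw [← h.mul_self_sub_mul_self_eq, hu, hi, sub_self]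
  rcases mul_eq_zero.mp this with h | h
  · exact Or.inr (eq_neg_of_add_eq_zero_left h)
  · exact Or.inl (sub_eq_zero.mp h)

end Ring

section RealAlgebra

variable {A : Type*} [Ring A] [Algebra ℝ A]

theorem exists_smul_mul_self_eq_neg_one {b : A} {r : ℝ} (hb : b * b = algebraMap ℝ A r)
    (hr : r < 0) : ∃ κ : ℝ, κ ≠ 0 ∧ (κ • b) * (κ • b) = -1 := by
  have hs : √(-r) ≠ 0 := Real.sqrt_ne_zero'.mpr (neg_pos.mpr hr)
  refine ⟨(√(-r))⁻¹, inv_ne_zero hs, ?_⟩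
  have : (√(-r))⁻¹ * (√(-r))⁻¹ * r = -1 := by
    rw [← mul_inv, Real.mul_self_sqrt (neg_nonneg.mpr hr.le), inv_neg, neg_mul,
      inv_mul_cancel₀ hr.ne]
  rw [smul_mul_smul, hb, Algebra.smul_def, ← map_mul, this, map_neg, map_one]

theorem mem_range_algebraMap_of_mul_self_eq [NoZeroDivisors A] {b : A} {r : ℝ}
    (hb : b * b = algebraMap ℝ A r) (hr : 0 ≤ r) : b ∈ Set.range (algebraMap ℝ A) := by
  have : (b + algebraMap ℝ A √r) * (b - algebraMap ℝ A √r) = 0 := by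
    rw [← (Algebra.commute_algebraMap_right _ b).mul_self_sub_mul_self_eq, hb, ← map_mul,
      Real.mul_self_sqrt hr, sub_self]
  rcases mul_eq_zero.mp this with h | h
  · exact ⟨-√r, by rw [map_neg, eq_neg_of_add_eq_zero_left h]⟩
  · exact ⟨√r, (sub_eq_zero.mp h).symm⟩

variable [Nontrivial A] [NoZeroDivisors A] [FiniteDimensional ℝ A]

theorem exists_sub_algebraMap_mul_self_eq (x : A) :
    ∃ t r : ℝ, (x - algebraMap ℝ A t) * (x - algebraMap ℝ A t) = algebraMap ℝ A r := by
  have : IsDomain A := NoZeroDivisors.to_isDomain A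
  have hx : IsIntegral ℝ x := Algebra.IsIntegral.isIntegral x
  have hdeg : (minpoly ℝ x).natDegree ≤ 2 := (minpoly.irreducible hx).natDegree_le_two
  -- padding the minimal polynomial with a power of `X` gives a monic quadratic killing `x`
  have hquad := (IsMonicOfDegree.mk rfl (minpoly.monic hx)).mul
    (isMonicOfDegree_X_pow ℝ (2 - (minpoly ℝ x).natDegree))
  rw [Nat.add_sub_of_le hdeg] at hquad
  obtain ⟨t, r, hp⟩ := hquad.exists_eq_sub_C_mul_self_sub_C
  have := congrArg (aeval x) hp
  simp only [map_mul, minpoly.aeval, zero_mul, map_sub, aeval_X, aeval_C] at this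
  exact ⟨t, r, (sub_eq_zero.mp this.symm)⟩

theorem exists_mul_self_eq_neg_one_of_notMem_range {x : A}
    (hx : x ∉ Set.range (algebraMap ℝ A)) : ∃ i : A, i * i = -1 := by
  obtain ⟨t, r, hr⟩ := exists_sub_algebraMap_mul_self_eq x
  obtain hr0 | hr0 := lt_or_ge r 0
  · obtain ⟨κ, -, hκ⟩ := exists_smul_mul_self_eq_neg_one hr hr0
    exact ⟨_, hκ⟩
  · obtain ⟨c, hc⟩ := mem_range_algebraMap_of_mul_self_eq hr hr0
    exact absurd ⟨t + c, by rw [map_add, hc, add_sub_cancel]⟩ hx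

theorem exists_eq_algebraMap_add_smul_of_commute {i x : A} (hi : i * i = -1)
    (hx : Commute x i) : ∃ c d : ℝ, x = algebraMap ℝ A c + d • i := by
  obtain ⟨t, r, hr⟩ := exists_sub_algebraMap_mul_self_eq x
  suffices ∃ c d : ℝ, x - algebraMap ℝ A t = algebraMap ℝ A c + d • i by
    obtain ⟨c, d, h⟩ := this
    exact ⟨t + c, d, by rw [map_add, add_assoc, ← h, add_sub_cancel]⟩
  obtain hr0 | hr0 := lt_or_ge r 0
  · obtain ⟨κ, hκ, hu⟩ := exists_smul_mul_self_eq_neg_one hr hr0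
    have hcomm := (hx.sub_left (Algebra.commute_algebraMap_left t i)).smul_left κ
    rcases eq_or_eq_neg_of_mul_self_eq_neg_one hu hi hcomm with h | h
    · exact ⟨0, κ⁻¹, by rw [map_zero, zero_add, ← h, inv_smul_smul₀ hκ]⟩
    · exact ⟨0, -κ⁻¹, by rw [map_zero, zero_add, neg_smul, ← smul_neg, ← h, inv_smul_smul₀ hκ]⟩
  · obtain ⟨c, hc⟩ := mem_range_algebraMap_of_mul_self_eq hr hr0
    exact ⟨c, 0, by rw [zero_smul, add_zero, hc]⟩

theorem mem_adjoin_singleton_of_commute {i x : A} (hi : i * i = -1) (hx : Commute x i) :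
    x ∈ Algebra.adjoin ℝ {i} := by
  obtain ⟨c, d, rfl⟩ := exists_eq_algebraMap_add_smul_of_commute hi hx
  exact add_mem (algebraMap_mem _ c)
    (Subalgebra.smul_mem _ (Algebra.self_mem_adjoin_singleton ℝ i) d)

theorem exists_mul_self_eq_neg_one_and_anticomm {i y : A} (hi : i * i = -1)
    (hy : ¬Commute y i) : ∃ j : A, j * j = -1 ∧ j * i = -(i * j) := by
  set z := y + i * y * i
  have hzi : z * i = y * i - i * y := add_mul_mul_mul_eq_mul_sub_mul hi y
  have hanti : z * i = -(i * z) := add_mul_mul_mul_eq_neg_mul hi y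
  have hz : ¬Commute z i := by
    intro h
    have hi0 : i ≠ 0 := by rintro rfl; simp at hi
    have hz0 : z ≠ 0 := fun h0 => hy (sub_eq_zero.mp (by rw [← hzi, h0, zero_mul]))
    have hiz : i * z = -(i * z) := h.eq.symm.trans hanti
    have : (2 : ℝ) • (i * z) = 0 := by rw [two_smul]; exact add_eq_zero_iff_eq_neg.mpr hiz
    exact mul_ne_zero hi0 hz0 ((smul_eq_zero.mp this).resolve_left two_ne_zero)
  obtain ⟨c, d, hcd⟩ := exists_eq_algebraMap_add_smul_of_commute hi
    (commute_mul_self_of_mul_eq_neg_mul hanti)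
  have hd : d = 0 := by
    by_contra hd
    have hzd : Commute z (d • i) := by
      have := ((Commute.refl z).mul_right (Commute.refl z)).sub_right
        (Algebra.commute_algebraMap_right c z)
      rwa [hcd, add_sub_cancel_left] at this
    exact hz (by simpa [hd] using hzd.smul_right d⁻¹)
  rw [hd, zero_smul, add_zero] at hcd
  obtain hc | hc := lt_or_ge c 0
  · obtain ⟨κ, -, hj⟩ := exists_smul_mul_self_eq_neg_one hcd hc
    exact ⟨κ • z, hj, by rw [smul_mul_assoc, mul_smul_comm, hanti, smul_neg]⟩
  · obtain ⟨r, hr⟩ := mem_range_algebraMap_of_mul_self_eq hcd hc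
    exact absurd (hr ▸ Algebra.commute_algebraMap_left r i) hz

theorem nonempty_algEquiv_complex_of_forall_commute {i : A} (hi : i * i = -1)
    (h : ∀ x : A, Commute x i) : Nonempty (A ≃ₐ[ℝ] ℂ) := by
  let f := Complex.liftAux i hi
  have hsurj : Function.Surjective f := by
    rw [← AlgHom.range_eq_top, Complex.range_liftAux, eq_top_iff]
    exact fun x _ => mem_adjoin_singleton_of_commute hi (h x)
  exact ⟨(AlgEquiv.ofBijective f ⟨f.toRingHom.injective, hsurj⟩).symm⟩

theorem nonempty_algEquiv_quaternion {i j : A} (hi : i * i = -1) (hj : j * j = -1)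
    (hji : j * i = -(i * j)) : Nonempty (A ≃ₐ[ℝ] Quaternion ℝ) := by
  let q : QuaternionAlgebra.Basis A (-1 : ℝ) 0 (-1) :=
    { i, j, k := i * j
      i_mul_i := by rw [hi, zero_smul, add_zero, neg_one_smul]
      j_mul_j := by rw [hj, neg_one_smul]
      i_mul_j := rfl
      j_mul_i := by rw [hji, zero_smul, zero_sub] }
  let f : Quaternion ℝ →ₐ[ℝ] A := q.liftHom
  have hsurj : Function.Surjective f := by
    rw [← AlgHom.range_eq_top]
    change q.liftHom.range = ⊤
    rw [QuaternionAlgebra.Basis.range_liftHom, eq_top_iff]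
    intro x _
    have hle : Algebra.adjoin ℝ {i} ≤ Algebra.adjoin ℝ {i, j, i * j} :=
      Algebra.adjoin_mono (by simp)
    have hjmem : j ∈ Algebra.adjoin ℝ {i, j, i * j} := Algebra.subset_adjoin (by simp)
    have hm : Commute ((x + i * x * i) * j) i := by
      show (x + i * x * i) * j * i = i * ((x + i * x * i) * j)
      rw [mul_assoc, hji, mul_neg, ← mul_assoc, add_mul_mul_mul_eq_neg_mul hi x, neg_mul,
        neg_neg, mul_assoc]
    -- `x - i x i` commutes with `i`, `x + i x i` anticommutes with it, and right multiplication
    -- by `j` turns anticommuting into commuting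
    have hx : x = (2 : ℝ)⁻¹ • (x - i * x * i) - (2 : ℝ)⁻¹ • ((x + i * x * i) * j * j) := by
      rw [mul_assoc _ j j, hj, mul_neg_one]
      module
    rw [hx]
    refine sub_mem (Subalgebra.smul_mem _ (hle ?_) _)
      (Subalgebra.smul_mem _ (mul_mem (hle ?_) hjmem) _)
    · exact mem_adjoin_singleton_of_commute hi (commute_sub_mul_mul_of_mul_self_eq_neg_one hi x)
    · exact mem_adjoin_singleton_of_commute hi hm
  exact ⟨(AlgEquiv.ofBijective f ⟨f.toRingHom.injective, hsurj⟩).symm⟩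

theorem nonempty_algEquiv_real_or_complex_or_quaternion :
    Nonempty (A ≃ₐ[ℝ] ℝ) ∨ Nonempty (A ≃ₐ[ℝ] ℂ) ∨ Nonempty (A ≃ₐ[ℝ] Quaternion ℝ) := by
  by_cases hreal : ∀ x : A, x ∈ Set.range (algebraMap ℝ A)
  · exact Or.inl
      ⟨(AlgEquiv.ofBijective (Algebra.ofId ℝ A) ⟨(algebraMap ℝ A).injective, hreal⟩).symm⟩
  push Not at hreal
  obtain ⟨x, hx⟩ := hreal
  obtain ⟨i, hi⟩ := exists_mul_self_eq_neg_one_of_notMem_range hx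
  by_cases hcomm : ∀ y : A, Commute y i
  · exact Or.inr (Or.inl (nonempty_algEquiv_complex_of_forall_commute hi hcomm))
  push Not at hcomm
  obtain ⟨y, hy⟩ := hcomm
  obtain ⟨j, hj, hji⟩ := exists_mul_self_eq_neg_one_and_anticomm hi hy
  exact Or.inr (Or.inr (nonempty_algEquiv_quaternion hi hj hji))

end RealAlgebra

theorem frobenius_dimension
    (A : Type*) [Ring A] [Nontrivial A] [Algebra ℝ A] [FiniteDimensional ℝ A]
    (h : ∀ a : A, a ≠ 0 → IsUnit a) :
    (Module.finrank ℝ A = 1 ∨ Module.finrank ℝ A = 2 ∨ Module.finrank ℝ A = 4) ∧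
      ((¬ ∀ a b : A, a * b = b * a) →
        Module.finrank ℝ A = 4 ∧ Nonempty (A ≃ₐ[ℝ] Quaternion ℝ)) := by
  have : NoZeroDivisors A :=
    ⟨fun {a _} hab => or_iff_not_imp_left.mpr fun ha => (h a ha).mul_right_eq_zero.mp hab⟩
  have comm_of_algEquiv {B : Type} [CommRing B] [Algebra ℝ B] (e : A ≃ₐ[ℝ] B) :
      ∀ a b : A, a * b = b * a := fun a b => e.injective (by rw [map_mul, map_mul, mul_comm])
  rcases nonempty_algEquiv_real_or_complex_or_quaternion (A := A) with ⟨⟨e⟩⟩ | ⟨⟨e⟩⟩ | ⟨⟨e⟩⟩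
  · exact ⟨Or.inl (e.toLinearEquiv.finrank_eq.trans (Module.finrank_self ℝ)),
      fun hnc => absurd (comm_of_algEquiv e) hnc⟩
  · exact ⟨Or.inr (Or.inl (e.toLinearEquiv.finrank_eq.trans Complex.finrank_real_complex)),
      fun hnc => absurd (comm_of_algEquiv e) hnc⟩
  · have hfin : Module.finrank ℝ A = 4 :=
      e.toLinearEquiv.finrank_eq.trans Quaternion.finrank_eq_four
    exact ⟨Or.inr (Or.inr hfin), fun _ => ⟨hfin, ⟨e⟩⟩⟩
end
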